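/- Let N be a finite set of prosumers, let ρ > 0, and let z, λ : N × N → ℝ. Define ẑ(n, m) = (z(n, m) − z(m, n))/2 + (λ(n, m) − λ(m, n))/(2ρ) and the dual update λ⁺(n, m) = λ(n, m) + ρ·(z(n, m) − ẑ(n, m)). Then for all n, m ∈ N, λ⁺(n, m) = λ⁺(m, n) = (λ(n, m) + λ(m, n))/2 + ρ·(z(n, m) + z(m, n))/2. -/
import Mathlib


/-- After the closed-form ADMM auxiliary update, the dual update makes the dual
variables (trading prices) of the two counterparties of every bilateral trade
coincide. -/
theorem admm_dual_update_price_consensus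
    {N : Type*} [Fintype N]
    (ρ : ℝ) (hρ : 0 < ρ) (z lam : N × N → ℝ)
    (zhat lamPlus : N × N → ℝ)
    (hzhat : ∀ n m : N, zhat (n, m) =
      (z (n, m) - z (m, n)) / 2 + (lam (n, m) - lam (m, n)) / (2 * ρ))
    (hlam : ∀ n m : N, lamPlus (n, m) = lam (n, m) + ρ * (z (n, m) - zhat (n, m))) :
    ∀ n m : N,
      lamPlus (n, m) = lamPlus (m, n) ∧
      lamPlus (n, m) = (lam (n, m) + lam (m, n)) / 2 + ρ * (z (n, m) + z (m, n)) / 2 := by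
  intro n m
  have key : ∀ a b : N, lamPlus (a, b) =
      (lam (a, b) + lam (b, a)) / 2 + ρ * (z (a, b) + z (b, a)) / 2 := by
    intro a b
    rw [hlam a b, hzhat a b]
    field_simp
    ring
  refine ⟨?_, key n m⟩
  rw [key n m, key m n]
  ring
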